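/- The permutation (swap) operator on ℂⁿ ⊗ ℂⁿ admits the expansion P = Σ_{k,l ∈ ℤ/nℤ} (ω^{kl}/n) A_{kl} ⊗ A_{-k,-l}. -/

import Mathlib

open Matrix

noncomputable def principalOmega (n : ℕ) : ℂ := Complex.exp (2 * Real.pi * Complex.I / n)

noncomputable def principalA (n : ℕ) (i j : ZMod n) : Matrix (ZMod n) (ZMod n) ℂ :=
  Matrix.of fun k l => if l - k = j then principalOmega n ^ ((i * k).val) else 0

/-!
Both sides are compared entrywise. At the entry `((a, b), (c, d))` of the right-hand side the
clock-and-shift matrices force `l = c - a` and `a - c = d - b`, and the characters combine to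
`(1 / |R|) ∑ k, ψ (k * (c - b))`, which by orthogonality of the primitive character `ψ` is the
indicator of `b = c`; together with `a - c = d - b` this is the indicator of `a = d ∧ b = c`, the
entry of the swap operator.
-/

section ClockShift

open Kronecker

theorem sum_single_kronecker_single_apply {R K : Type*} [Fintype R] [DecidableEq R]
    [NonAssocSemiring K] (a b c d : R) :
    (∑ i, ∑ j, single i j (1 : K) ⊗ₖ single j i (1 : K)) (a, b) (c, d) =
      if a = d ∧ b = c then 1 else 0 := by
  simp only [Matrix.sum_apply, kroneckerMap_apply, single_apply]
  simp [ite_and, eq_comm]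

variable {R K : Type*} [CommRing R] [Fintype R] [DecidableEq R] [Field K]

def clockShift (ψ : AddChar R K) (k l : R) : Matrix R R K :=
  of fun a b => if b - a = l then ψ (k * a) else 0

theorem sum_clockShift_kronecker_clockShift_apply [CharZero K] {ψ : AddChar R K}
    (hψ : ψ.IsPrimitive) (a b c d : R) :
    (∑ k, ∑ l, (ψ (k * l) / Fintype.card R) • (clockShift ψ k l ⊗ₖ clockShift ψ (-k) (-l)))
      (a, b) (c, d) = if a = d ∧ b = c then 1 else 0 := by
  simp only [Matrix.sum_apply, Matrix.smul_apply, kroneckerMap_apply, smul_eq_mul]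
  have inner : ∀ k, ∑ l, ψ (k * l) / Fintype.card R *
      (clockShift ψ k l a c * clockShift ψ (-k) (-l) b d) =
        if a - c = d - b then ψ (k * (c - b)) / Fintype.card R else 0 := by
    intro k
    rw [Finset.sum_eq_single (c - a) (fun l _ hl => by simp [clockShift, Ne.symm hl]) (by simp)]
    simp only [clockShift, of_apply, ↓reduceIte, neg_sub, eq_comm (a := d - b)]
    split_ifs
    · rw [div_mul_eq_mul_div, ← AddChar.map_add_eq_mul, ← AddChar.map_add_eq_mul]
      ring_nf
    · simp
  have hq : (Fintype.card R : K) ≠ 0 := Nat.cast_ne_zero.mpr Fintype.card_ne_zero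
  have hcond : (a - c = d - b ∧ c - b = 0) ↔ (a = d ∧ b = c) := by
    rw [sub_eq_zero]
    constructor
    · rintro ⟨h, rfl⟩
      exact ⟨sub_left_inj.mp h, rfl⟩
    · rintro ⟨rfl, rfl⟩
      exact ⟨rfl, rfl⟩
  simp only [inner, Finset.sum_ite_irrel, Finset.sum_const_zero, ← Finset.sum_div,
    AddChar.sum_mulShift _ hψ, ← hcond]
  rw [ite_and]
  split_ifs <;> simp [hq]

theorem sum_single_kronecker_single_eq_sum_clockShift [CharZero K] {ψ : AddChar R K}
    (hψ : ψ.IsPrimitive) :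
    ∑ i, ∑ j, single i j (1 : K) ⊗ₖ single j i (1 : K) =
      ∑ k, ∑ l, (ψ (k * l) / Fintype.card R) • (clockShift ψ k l ⊗ₖ clockShift ψ (-k) (-l)) := by
  ext ⟨a, b⟩ ⟨c, d⟩
  rw [sum_single_kronecker_single_apply, sum_clockShift_kronecker_clockShift_apply hψ]

end ClockShift

theorem principalOmega_pow_val (n : ℕ) [NeZero n] (x : ZMod n) :
    principalOmega n ^ x.val = ZMod.stdAddChar x := by
  rw [principalOmega, ← Complex.exp_nat_mul, ZMod.stdAddChar_apply, ZMod.toCircle_apply]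
  ring_nf

theorem principalA_eq_clockShift (n : ℕ) [NeZero n] (k l : ZMod n) :
    principalA n k l = clockShift ZMod.stdAddChar k l := by
  ext a b
  simp only [principalA, clockShift, of_apply, principalOmega_pow_val]

open Kronecker in
theorem swap_eq_principal_expansion (n : ℕ) [NeZero n] :
    (∑ i : ZMod n, ∑ j : ZMod n,
        (Matrix.single i j (1 : ℂ)) ⊗ₖ (Matrix.single j i (1 : ℂ))) =
      ∑ k : ZMod n, ∑ l : ZMod n,
        (principalOmega n ^ ((k * l).val) / n) •
          (principalA n k l ⊗ₖ principalA n (-k) (-l)) := by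
  simp only [principalA_eq_clockShift, principalOmega_pow_val]
  simpa only [ZMod.card] using
    sum_single_kronecker_single_eq_sum_clockShift (ZMod.isPrimitive_stdAddChar n)
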